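/- Let F be any 2-CNF on n variables. Then the total number of prime implicants of F is at most 3^{n/3} + 2^{n/2}. -/

import Mathlib

variable {V : Type*}

abbrev Lit (V : Type*) := V × Bool

def evalLit (α : V → Bool) (l : Lit V) : Bool := α l.1 == l.2

abbrev Clause2 (V : Type*) := Lit V × Lit V
abbrev CNF2 (V : Type*) := List (Clause2 V)
abbrev CNF (V : Type*) := List (List (Lit V))

def sat2 (α : V → Bool) (F : CNF2 V) : Prop :=
  ∀ c ∈ F, evalLit α c.1 = true ∨ evalLit α c.2 = true

def satCNF (α : V → Bool) (F : CNF V) : Prop :=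
  ∀ C ∈ F, ∃ l ∈ C, evalLit α l = true

def kCNF (k : ℕ) (F : CNF V) : Prop := ∀ C ∈ F, C.length ≤ k

def extendsR (α : V → Bool) (ρ : V → Option Bool) : Prop :=
  ∀ v b, ρ v = some b → α v = b

def unfix [DecidableEq V] (ρ : V → Option Bool) (v : V) : V → Option Bool :=
  Function.update ρ v none

def implicant2 (ρ : V → Option Bool) (F : CNF2 V) : Prop :=
  ∀ α, extendsR α ρ → sat2 α F

def primeImplicant2 [DecidableEq V] (ρ : V → Option Bool) (F : CNF2 V) : Prop :=
  implicant2 ρ F ∧ ∀ v, ρ v ≠ none → ¬ implicant2 (unfix ρ v) F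

def partialPI [DecidableEq V] (ρ : V → Option Bool) (F : CNF2 V) : Prop :=
  primeImplicant2 ρ F ∧ ∃ v, ρ v = none

def implicantC (ρ : V → Option Bool) (F : CNF V) : Prop :=
  ∀ α, extendsR α ρ → satCNF α F

def primeImplicantC [DecidableEq V] (ρ : V → Option Bool) (F : CNF V) : Prop :=
  implicantC ρ F ∧ ∀ v, ρ v ≠ none → ¬ implicantC (unfix ρ v) F

def implicantF (ρ : V → Option Bool) (f : (V → Bool) → Bool) : Prop :=
  ∀ α, extendsR α ρ → f α = true

def primeImplicantF [DecidableEq V] (ρ : V → Option Bool) (f : (V → Bool) → Bool) : Prop :=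
  implicantF ρ f ∧ ∀ v, ρ v ≠ none → ¬ implicantF (unfix ρ v) f

def negLit (l : Lit V) : Lit V := (l.1, !l.2)

def edge (F : CNF2 V) (u v : Lit V) : Prop :=
  ∃ c ∈ F, (u = negLit c.1 ∧ v = c.2) ∨ (u = negLit c.2 ∧ v = c.1)

def impliesL (F : CNF2 V) : Lit V → Lit V → Prop := Relation.TransGen (edge F)

def onCycle (F : CNF2 V) (u : Lit V) : Prop := impliesL F u u

def acyclicD (F : CNF2 V) : Prop := ∀ u, ¬ onCycle F u

def looplessD (F : CNF2 V) : Prop := ∀ u, ¬ edge F u u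

def litVal (ρ : V → Option Bool) (l : Lit V) : Option Bool := (ρ l.1).map (· == l.2)

def Aset (ρ : V → Option Bool) : Set (Lit V) := {l | litVal ρ l = some false}
def Bset (ρ : V → Option Bool) : Set (Lit V) := {l | litVal ρ l = some true}
def Cset (ρ : V → Option Bool) : Set (Lit V) := {l | litVal ρ l = none}

def Nminus (F : CNF2 V) (S : Set (Lit V)) : Set (Lit V) :=
  {u | u ∉ S ∧ ∃ v ∈ S, impliesL F u v}
def Nplus (F : CNF2 V) (S : Set (Lit V)) : Set (Lit V) :=
  {v | v ∉ S ∧ ∃ u ∈ S, impliesL F u v}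

def Tfml (m : ℕ) : CNF2 (Fin m × Fin 3) :=
  (List.finRange m).flatMap (fun i =>
    [(((i, 0), true), ((i, 1), true)),
     (((i, 1), true), ((i, 2), true)),
     (((i, 0), true), ((i, 2), true))])

def adjVar (F : CNF2 V) (x y : V) : Prop :=
  x ≠ y ∧ ∃ u v : Lit V, u.1 = x ∧ v.1 = y ∧ (impliesL F u v ∨ impliesL F v u)

/-!
After deleting tautological clauses, an implicant of a 2-CNF is a partial assignment that makes a
literal of every clause true, and truth propagates along the implication digraph with the edges
`¬a → b` and `¬b → a` for each clause `a ∨ b`. The prime implicants of a formula on `n` variables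
number at most `3 ^ (n / 3)`, by induction on `n`. If a literal and its negation imply each other,
there is no implicant at all. If the digraph has a cycle, its strong component contains two
variables, every implicant gives all its literals one common value, and fixing that value leaves a
formula on at most `n - 2` variables; this gives `2 * 3 ^ ((n - 2) / 3) ≤ 3 ^ (n / 3)`. If the
digraph is acyclic, every true literal of a prime implicant is reached from a unit clause or from a
free literal, so a prime implicant is determined by its free variables. These form a maximal
independent set of the graph joining two variables when literals of them are related, and the
Moon–Moser bound on the number of maximal independent sets concludes.
-/

section Literals

@[simp] lemma negLit_negLit (l : Lit V) : negLit (negLit l) = l := by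
  simp [negLit]

@[simp] lemma negLit_fst (l : Lit V) : (negLit l).1 = l.1 := rfl

lemma litVal_eq_some_true_iff {ρ : V → Option Bool} {l : Lit V} :
    litVal ρ l = some true ↔ ρ l.1 = some l.2 := by
  cases h : ρ l.1 <;> simp [litVal, h]

lemma litVal_eq_none_iff {ρ : V → Option Bool} {l : Lit V} :
    litVal ρ l = none ↔ ρ l.1 = none := by
  simp [litVal]

lemma litVal_negLit (ρ : V → Option Bool) (l : Lit V) :
    litVal ρ (negLit l) = (litVal ρ l).map (!·) := by
  obtain ⟨v, b⟩ := l
  cases h : ρ v <;> cases b <;> simp [litVal, negLit, h]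

lemma litVal_negLit_eq_some_true_iff {ρ : V → Option Bool} {l : Lit V} :
    litVal ρ (negLit l) = some true ↔ litVal ρ l = some false := by
  rw [litVal_negLit]; cases litVal ρ l <;> simp

lemma litVal_negLit_eq_some_false_iff {ρ : V → Option Bool} {l : Lit V} :
    litVal ρ (negLit l) = some false ↔ litVal ρ l = some true := by
  rw [litVal_negLit]; cases litVal ρ l <;> simp

lemma eq_negLit_of_fst_eq {l l' : Lit V} (h₁ : l.1 = l'.1) (h₂ : l ≠ l') : l = negLit l' := by
  obtain ⟨v, b⟩ := l; obtain ⟨v', b'⟩ := l'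
  cases b <;> cases b' <;> simp_all [negLit]

end Literals

section Implicants

def Covers (ρ : V → Option Bool) (c : Clause2 V) : Prop :=
  litVal ρ c.1 = some true ∨ litVal ρ c.2 = some true

instance (ρ : V → Option Bool) (c : Clause2 V) : Decidable (Covers ρ c) :=
  inferInstanceAs (Decidable (_ ∨ _))

def TautologyFree (F : CNF2 V) : Prop := ∀ c ∈ F, c.1 ≠ negLit c.2

lemma implicant2_iff_forall_covers {ρ : V → Option Bool} {F : CNF2 V} (ht : TautologyFree F) :
    implicant2 ρ F ↔ ∀ c ∈ F, Covers ρ c := by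
  classical
  refine ⟨fun h c hc => ?_, fun h α hα c hc => ?_⟩
  · by_contra hnc
    simp only [Covers, not_or, litVal_eq_some_true_iff] at hnc
    -- a total extension of `ρ` falsifying both literals of `c`, consistent as `c` is no tautology
    let α : V → Bool := fun v => (ρ v).getD (if v = c.1.1 then !c.1.2 else !c.2.2)
    have hext : extendsR α ρ := fun v b hv => by simp [α, hv]
    have h₁ : evalLit α c.1 = false := by
      cases h₁ : ρ c.1.1 <;> simp_all [α, evalLit]
    have h₂ : evalLit α c.2 = false := by
      cases h₂ : ρ c.2.1 with
      | some b => simp_all [α, evalLit]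
      | none =>
        by_cases hv : c.2.1 = c.1.1
        · have : c.1 = c.2 := by
            by_contra hne
            exact ht c hc (eq_negLit_of_fst_eq hv.symm hne)
          simp [α, evalLit, this, h₂]
        · simp [α, evalLit, h₂, hv]
    simpa [h₁, h₂] using h α hext c hc
  · rcases h c hc with h1 | h1
    · left; simp [evalLit, hα _ _ (litVal_eq_some_true_iff.1 h1)]
    · right; simp [evalLit, hα _ _ (litVal_eq_some_true_iff.1 h1)]

variable [DecidableEq V]

lemma primeImplicant2_iff {ρ : V → Option Bool} {F : CNF2 V} (ht : TautologyFree F) :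
    primeImplicant2 ρ F ↔
      (∀ c ∈ F, Covers ρ c) ∧ ∀ v, ρ v ≠ none → ∃ c ∈ F, ¬ Covers (unfix ρ v) c := by
  simp only [primeImplicant2, implicant2_iff_forall_covers ht, not_forall, exists_prop]

lemma litVal_unfix (ρ : V → Option Bool) (v : V) (l : Lit V) :
    litVal (unfix ρ v) l = if l.1 = v then none else litVal ρ l := by
  split_ifs with h <;> simp [litVal, unfix, h]

def removeTautologies (F : CNF2 V) : CNF2 V := F.filter fun c => c.1 ≠ negLit c.2

lemma tautologyFree_removeTautologies (F : CNF2 V) : TautologyFree (removeTautologies F) :=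
  fun _ hc => by simpa using (List.mem_filter.1 hc).2

lemma sat2_removeTautologies_iff (α : V → Bool) (F : CNF2 V) :
    sat2 α (removeTautologies F) ↔ sat2 α F := by
  refine ⟨fun h c hc => ?_, fun h c hc => h c (List.mem_filter.1 hc).1⟩
  by_cases hct : c.1 = negLit c.2
  · rw [hct]
    unfold evalLit negLit
    cases α c.2.1 <;> cases c.2.2 <;> simp
  · exact h c (List.mem_filter.2 ⟨hc, by simpa using hct⟩)

lemma primeImplicant2_removeTautologies_iff (ρ : V → Option Bool) (F : CNF2 V) :
    primeImplicant2 ρ (removeTautologies F) ↔ primeImplicant2 ρ F := by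
  simp only [primeImplicant2, implicant2, sat2_removeTautologies_iff]

end Implicants

section ImplicationGraph

variable {F : CNF2 V} {ρ : V → Option Bool} {u w : Lit V}

lemma edge_negLit (h : edge F u w) : edge F (negLit w) (negLit u) := by
  obtain ⟨c, hc, ⟨rfl, rfl⟩ | ⟨rfl, rfl⟩⟩ := h
  · exact ⟨c, hc, Or.inr ⟨rfl, by simp⟩⟩
  · exact ⟨c, hc, Or.inl ⟨rfl, by simp⟩⟩

lemma impliesL_negLit (h : impliesL F u w) : impliesL F (negLit w) (negLit u) := by
  induction h with
  | single e => exact .single (edge_negLit e)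
  | tail _ e ih => exact .head (edge_negLit e) ih

lemma not_edge_self (ht : TautologyFree F) (u : Lit V) : ¬ edge F u u := by
  rintro ⟨c, hc, ⟨h₁, h₂⟩ | ⟨h₁, h₂⟩⟩
  · exact ht c hc (by rw [← h₂, h₁, negLit_negLit])
  · exact ht c hc (by rw [← h₂, h₁])

lemma litVal_eq_some_true_of_edge (hρ : ∀ c ∈ F, Covers ρ c) (e : edge F u w)
    (hu : litVal ρ u ≠ some false) : litVal ρ w = some true := by
  obtain ⟨c, hc, ⟨rfl, rfl⟩ | ⟨rfl, rfl⟩⟩ := e <;>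
  · rw [Ne, litVal_negLit_eq_some_false_iff] at hu
    have := hρ c hc
    unfold Covers at this
    tauto

lemma litVal_eq_some_true_of_impliesL (hρ : ∀ c ∈ F, Covers ρ c) (h : impliesL F u w)
    (hu : litVal ρ u ≠ some false) : litVal ρ w = some true := by
  induction h with
  | single e => exact litVal_eq_some_true_of_edge hρ e hu
  | tail _ e ih => exact litVal_eq_some_true_of_edge hρ e (by simp [ih])

lemma not_forall_covers_of_impliesL_negLit {l : Lit V} (h₁ : impliesL F l (negLit l))
    (h₂ : impliesL F (negLit l) l) : ¬ ∀ c ∈ F, Covers ρ c := by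
  intro hρ
  by_cases hl : litVal ρ l = some false
  · have hneg : litVal ρ (negLit l) = some true := litVal_negLit_eq_some_true_iff.2 hl
    have := litVal_eq_some_true_of_impliesL hρ h₂ (by simp [hneg])
    simp_all
  · have := litVal_eq_some_true_of_impliesL hρ h₁ hl
    exact hl (litVal_negLit_eq_some_true_iff.1 this)

def VarsIn (F : CNF2 V) (s : Finset V) : Prop := ∀ c ∈ F, c.1.1 ∈ s ∧ c.2.1 ∈ s

lemma mem_of_edge {s : Finset V} (hv : VarsIn F s) (e : edge F u w) : u.1 ∈ s ∧ w.1 ∈ s := by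
  obtain ⟨c, hc, ⟨rfl, rfl⟩ | ⟨rfl, rfl⟩⟩ := e
  · exact hv c hc
  · exact (hv c hc).symm

lemma mem_of_impliesL {s : Finset V} (hv : VarsIn F s) (h : impliesL F u w) :
    u.1 ∈ s ∧ w.1 ∈ s := by
  induction h with
  | single e => exact mem_of_edge hv e
  | tail _ e ih => exact ⟨ih.1, (mem_of_edge hv e).2⟩

end ImplicationGraph

section CriticalClause

variable [DecidableEq V] {F : CNF2 V} {ρ : V → Option Bool}

lemma unit_mem_or_exists_edge_of_primeImplicant2 (ht : TautologyFree F)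
    (h : primeImplicant2 ρ F) {v : V} {b : Bool} (hv : ρ v = some b) :
    ((v, b), (v, b)) ∈ F ∨ ∃ w, edge F w (v, b) ∧ litVal ρ w ≠ some false := by
  obtain ⟨hcov, hcrit⟩ := (primeImplicant2_iff ht).1 h
  obtain ⟨c, hc, hnc⟩ := hcrit v (by simp [hv])
  -- `c` is covered by `ρ` but not once `v` is freed, so its true literal is `(v, b)`
  have key : ∀ l l' : Lit V, (c = (l, l') ∨ c = (l', l)) → litVal ρ l = some true →
      litVal (unfix ρ v) l ≠ some true → litVal (unfix ρ v) l' ≠ some true →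
      ((v, b), (v, b)) ∈ F ∨ ∃ w, edge F w (v, b) ∧ litVal ρ w ≠ some false := by
    intro l l' hcl hl hl_unfix hl'
    have hlv : l.1 = v := by_contra fun hlv => hl_unfix (by simp [litVal_unfix, hlv, hl])
    have hlb : l = (v, b) := by
      rw [litVal_eq_some_true_iff, hlv, hv] at hl
      exact Prod.ext hlv (Option.some_injective _ hl).symm
    subst hlb
    by_cases hl'v : l'.1 = v
    · by_cases hl'b : l' = (v, b)
      · subst hl'b
        left
        rcases hcl with rfl | rfl <;> exact hc
      · have := eq_negLit_of_fst_eq hl'v.symm (Ne.symm hl'b)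
        exfalso
        rcases hcl with rfl | rfl
        · exact ht _ hc this
        · exact ht _ hc (by rw [this, negLit_negLit])
    · right
      refine ⟨negLit l', ⟨c, hc, ?_⟩, ?_⟩
      · rcases hcl with rfl | rfl <;> simp
      · rw [Ne, litVal_negLit_eq_some_false_iff]
        simpa [litVal_unfix, hl'v] using hl'
  simp only [Covers, not_or] at hnc
  rcases hcov c hc with h₁ | h₂
  · exact key c.1 c.2 (Or.inl rfl) h₁ hnc.1 hnc.2
  · exact key c.2 c.1 (Or.inr rfl) h₂ hnc.2 hnc.1

lemma eq_none_of_not_mem (ht : TautologyFree F) {s : Finset V} (hv : VarsIn F s)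
    (h : primeImplicant2 ρ F) {v : V} (hvs : v ∉ s) : ρ v = none := by
  by_contra hne
  obtain ⟨b, hb⟩ := Option.ne_none_iff_exists'.1 hne
  rcases unit_mem_or_exists_edge_of_primeImplicant2 ht h hb with hu | ⟨w, e, -⟩
  · exact hvs (hv _ hu).1
  · exact hvs (mem_of_edge hv e).2

end CriticalClause

section Restriction

variable {σ τ ρ : V → Option Bool} {F : CNF2 V} {c c' : Clause2 V}

def Refines (ρ σ : V → Option Bool) : Prop := ∀ v b, σ v = some b → ρ v = some b

def eraseDom (σ ρ : V → Option Bool) : V → Option Bool := fun v => if σ v = none then ρ v else none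

/-- What remains of `c` under the partial assignment `σ`, a unit clause `l` being written `(l, l)`;
`none` when `σ` satisfies `c` or fixes both of its variables. -/
def restrictClause (σ : V → Option Bool) (c : Clause2 V) : Option (Clause2 V) :=
  if Covers σ c then none
  else if σ c.1.1 = none then some (if σ c.2.1 = none then c else (c.1, c.1))
  else if σ c.2.1 = none then some (c.2, c.2) else none

def restrictCNF (σ : V → Option Bool) (F : CNF2 V) : CNF2 V := F.filterMap (restrictClause σ)

lemma litVal_of_refines (h : Refines τ σ) {l : Lit V} (hl : σ l.1 ≠ none) :
    litVal τ l = litVal σ l := by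
  obtain ⟨b, hb⟩ := Option.ne_none_iff_exists'.1 hl
  simp [litVal, hb, h _ _ hb]

lemma litVal_eraseDom {l : Lit V} (hl : σ l.1 = none) : litVal (eraseDom σ τ) l = litVal τ l := by
  simp [litVal, eraseDom, hl]

lemma fst_ne_none_of_litVal {l : Lit V} {x : Bool} (hl : litVal σ l = some x) : σ l.1 ≠ none := by
  intro h; simp [litVal, h] at hl

lemma covers_eraseDom_iff (hτ : Refines τ σ) (hc : restrictClause σ c = some c') :
    Covers (eraseDom σ τ) c' ↔ Covers τ c := by
  unfold restrictClause at hc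
  split_ifs at hc with hcov h₁ h₂ h₂ <;> cases hc <;>
    simp only [Covers, not_or] at hcov ⊢ <;>
    simp [litVal_eraseDom, litVal_of_refines hτ, *]

lemma covers_iff_of_restrictClause_eq_none (hτ : Refines τ σ) (hc : restrictClause σ c = none) :
    Covers τ c ↔ Covers σ c := by
  unfold restrictClause at hc
  split_ifs at hc with hcov h₁ h₂
  · refine ⟨fun _ => hcov, fun h => ?_⟩
    rcases h with h | h
    · exact .inl (by rwa [litVal_of_refines hτ (fst_ne_none_of_litVal h)])
    · exact .inr (by rwa [litVal_of_refines hτ (fst_ne_none_of_litVal h)])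
  · simp [Covers, litVal_of_refines hτ, *]

lemma tautologyFree_restrictCNF (ht : TautologyFree F) : TautologyFree (restrictCNF σ F) := by
  intro c' hc'
  obtain ⟨c, hc, hcc'⟩ := List.mem_filterMap.1 hc'
  unfold restrictClause at hcc'
  split_ifs at hcc' <;> cases hcc'
  · exact ht _ hc
  all_goals
    intro h
    simpa [negLit] using congrArg Prod.snd h

lemma varsIn_restrictCNF {s : Finset V} (hv : VarsIn F s) :
    VarsIn (restrictCNF σ F) (s.filter (σ · = none)) := by
  intro c' hc'
  obtain ⟨c, hc, hcc'⟩ := List.mem_filterMap.1 hc'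
  have := hv c hc
  unfold restrictClause at hcc'
  split_ifs at hcc' <;> cases hcc' <;> simp_all

lemma eq_of_refines_of_refines {ρ₁ ρ₂ : V → Option Bool} (h₁₂ : Refines ρ₁ ρ₂)
    (h₂₁ : Refines ρ₂ ρ₁) : ρ₁ = ρ₂ := by
  funext v
  cases h₁ : ρ₁ v with
  | some b => exact (h₂₁ v b h₁).symm
  | none => cases h₂ : ρ₂ v with
    | none => rfl
    | some b => simpa [h₁] using h₁₂ v b h₂

lemma eq_of_eraseDom_eq {σ ρ₁ ρ₂ : V → Option Bool} (h₁ : Refines ρ₁ σ) (h₂ : Refines ρ₂ σ)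
    (he : eraseDom σ ρ₁ = eraseDom σ ρ₂) : ρ₁ = ρ₂ := by
  funext v
  cases hv : σ v with
  | none => simpa [eraseDom, hv] using congrFun he v
  | some b => rw [h₁ v b hv, h₂ v b hv]

variable [DecidableEq V]

lemma refines_unfix (h : Refines ρ σ) {v : V} (hv : σ v = none) : Refines (unfix ρ v) σ := by
  intro w b hw
  have hwv : w ≠ v := by rintro rfl; simp [hv] at hw
  simpa [unfix, hwv] using h w b hw

lemma eraseDom_unfix (σ ρ : V → Option Bool) (v : V) :
    eraseDom σ (unfix ρ v) = unfix (eraseDom σ ρ) v := by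
  funext w
  by_cases hw : w = v <;> simp [eraseDom, unfix, hw]

lemma primeImplicant2_restrictCNF (ht : TautologyFree F) (h : primeImplicant2 ρ F)
    (hσ : Refines ρ σ) : primeImplicant2 (eraseDom σ ρ) (restrictCNF σ F) := by
  obtain ⟨hcov, hcrit⟩ := (primeImplicant2_iff ht).1 h
  refine (primeImplicant2_iff (tautologyFree_restrictCNF ht)).2 ⟨fun c' hc' => ?_, fun v hv => ?_⟩
  · obtain ⟨c, hc, hcc'⟩ := List.mem_filterMap.1 hc'
    exact (covers_eraseDom_iff hσ hcc').2 (hcov c hc)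
  · have hσv : σ v = none := by
      by_contra hσv
      simp [eraseDom, hσv] at hv
    obtain ⟨c, hc, hnc⟩ := hcrit v (by simpa [eraseDom, hσv] using hv)
    have hτ : Refines (unfix ρ v) σ := refines_unfix hσ hσv
    cases hcc' : restrictClause σ c with
    | none =>
      rw [covers_iff_of_restrictClause_eq_none hτ hcc'] at hnc
      exact absurd ((covers_iff_of_restrictClause_eq_none hσ hcc').1 (hcov c hc)) hnc
    | some c' =>
      refine ⟨c', List.mem_filterMap.2 ⟨c, hc, hcc'⟩, ?_⟩
      rwa [← eraseDom_unfix, covers_eraseDom_iff hτ hcc']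

end Restriction

section Arithmetic

lemma pow_three_le_three_pow (k : ℕ) : k ^ 3 ≤ 3 ^ k := by
  induction k with
  | zero => norm_num
  | succ j ih =>
    rcases Nat.lt_or_ge j 3 with hj | hj
    · interval_cases j <;> norm_num
    · calc (j + 1) ^ 3 ≤ 3 * j ^ 3 := by nlinarith [Nat.mul_le_mul hj hj]
        _ ≤ 3 * 3 ^ j := Nat.mul_le_mul_left 3 ih
        _ = 3 ^ (j + 1) := (pow_succ' 3 j).symm

lemma natCast_le_three_rpow (k : ℕ) : (k : ℝ) ≤ 3 ^ ((k : ℝ) / 3) := by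
  by_contra! h
  have hcube : ((3 : ℝ) ^ ((k : ℝ) / 3)) ^ 3 = 3 ^ k := by
    rw [← Real.rpow_natCast, ← Real.rpow_mul (by norm_num)]
    norm_num
  have := pow_lt_pow_left₀ h (by positivity) (by norm_num : (3 : ℕ) ≠ 0)
  rw [hcube] at this
  exact this.not_ge (by exact_mod_cast pow_three_le_three_pow k)

lemma natCast_mul_three_rpow_le {k m n : ℕ} (h : m + k ≤ n) :
    (k : ℝ) * 3 ^ ((m : ℝ) / 3) ≤ 3 ^ ((n : ℝ) / 3) :=
  calc (k : ℝ) * 3 ^ ((m : ℝ) / 3) ≤ 3 ^ ((k : ℝ) / 3) * 3 ^ ((m : ℝ) / 3) := by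
        gcongr; exact natCast_le_three_rpow k
    _ = 3 ^ (((m + k : ℕ) : ℝ) / 3) := by
        rw [← Real.rpow_add (by norm_num)]; push_cast; ring_nf
    _ ≤ 3 ^ ((n : ℝ) / 3) := by gcongr; norm_num

end Arithmetic

section MoonMoser

variable (G : SimpleGraph V)

/-- `M` is a maximal independent set of the subgraph of `G` induced on `s`. -/
def IsMaximalIndepSetIn (s M : Finset V) : Prop :=
  M ⊆ s ∧ G.IsIndepSet (M : Set V) ∧ ∀ v ∈ s, v ∉ M → ∃ u ∈ M, G.Adj u v

variable {G}

lemma finite_setOf_isMaximalIndepSetIn (s : Finset V) :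
    {M | IsMaximalIndepSetIn G s M}.Finite :=
  s.powerset.finite_toSet.subset fun _ hM => Finset.mem_powerset.2 hM.1

section Branching

variable [DecidableEq V] [DecidableRel G.Adj] {s M : Finset V}

lemma IsMaximalIndepSetIn.erase (hM : IsMaximalIndepSetIn G s M) {u : V} (hu : u ∈ M) :
    IsMaximalIndepSetIn G (s.filter fun w => ¬ (u = w ∨ G.Adj u w)) (M.erase u) := by
  obtain ⟨hMs, hind, hdom⟩ := hM
  refine ⟨fun x hx => ?_, hind.mono (by simp), fun w hw hwM => ?_⟩
  · obtain ⟨hxu, hxM⟩ := Finset.mem_erase.1 hx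
    refine Finset.mem_filter.2 ⟨hMs hxM, ?_⟩
    rintro (rfl | hadj)
    · exact hxu rfl
    · exact hind hu hxM (Ne.symm hxu) hadj
  · obtain ⟨hws, hw⟩ := Finset.mem_filter.1 hw
    simp only [not_or] at hw
    obtain ⟨x, hxM, hadj⟩ := hdom w hws fun h => hwM (Finset.mem_erase.2 ⟨Ne.symm hw.1, h⟩)
    refine ⟨x, Finset.mem_erase.2 ⟨?_, hxM⟩, hadj⟩
    rintro rfl
    exact hw.2 hadj

lemma ncard_isMaximalIndepSetIn_le_sum {v : V} (hv : v ∈ s) :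
    {M | IsMaximalIndepSetIn G s M}.ncard ≤
      ∑ u ∈ s.filter (fun w => v = w ∨ G.Adj v w),
        {M | IsMaximalIndepSetIn G (s.filter fun w => ¬ (u = w ∨ G.Adj u w)) M}.ncard := by
  have hcover : {M | IsMaximalIndepSetIn G s M} ⊆
      ⋃ u ∈ s.filter (fun w => v = w ∨ G.Adj v w), {M | IsMaximalIndepSetIn G s M ∧ u ∈ M} := by
    intro M hM
    simp only [Set.mem_iUnion, Finset.mem_filter, exists_prop]
    by_cases hvM : v ∈ M
    · exact ⟨v, ⟨hv, .inl rfl⟩, hM, hvM⟩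
    · obtain ⟨u, huM, hadj⟩ := hM.2.2 v hv hvM
      exact ⟨u, ⟨hM.1 huM, .inr hadj.symm⟩, hM, huM⟩
  refine (Set.ncard_le_ncard hcover
    ((finite_setOf_isMaximalIndepSetIn (G := G) s).subset ?_)).trans <|
      (Finset.set_ncard_biUnion_le _ _).trans <| Finset.sum_le_sum fun u _ => ?_
  · simp only [Set.iUnion_subset_iff]
    exact fun _ _ M hM => hM.1
  · refine Set.ncard_le_ncard_of_injOn (fun M => M.erase u) (fun M hM => hM.1.erase hM.2)
      (fun M₁ hM₁ M₂ hM₂ he => ?_) (finite_setOf_isMaximalIndepSetIn _)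
    rw [← Finset.insert_erase hM₁.2, ← Finset.insert_erase hM₂.2]
    exact congrArg (insert u) he

end Branching

/-- The Moon–Moser bound. -/
theorem ncard_isMaximalIndepSetIn_le (G : SimpleGraph V) (s : Finset V) :
    ({M | IsMaximalIndepSetIn G s M}.ncard : ℝ) ≤ 3 ^ ((s.card : ℝ) / 3) := by
  classical
  induction hn : s.card using Nat.strong_induction_on generalizing s with
  | _ n ih =>
  subst hn
  rcases s.eq_empty_or_nonempty with rfl | hne
  · have : {M | IsMaximalIndepSetIn G ∅ M}.ncard ≤ 1 :=
      (Set.ncard_le_one (finite_setOf_isMaximalIndepSetIn ∅)).2 fun M₁ h₁ M₂ h₂ => by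
        rw [Finset.subset_empty.1 h₁.1, Finset.subset_empty.1 h₂.1]
    simpa using this
  let N : V → Finset V := fun u => s.filter fun w => u = w ∨ G.Adj u w
  -- branching on a vertex with the smallest closed neighbourhood deletes `(N v).card` vertices
  -- in each of the `(N v).card` branches
  obtain ⟨v, hv, hmin⟩ := s.exists_min_image (fun u => (N u).card) hne
  have hNv : 0 < (N v).card := Finset.card_pos.2 ⟨v, by simp [N, hv]⟩
  have hres : ∀ u ∈ N v,
      (s.filter fun w => ¬ (u = w ∨ G.Adj u w)).card + (N v).card ≤ s.card := by
    intro u hu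
    have : (N u).card + (s.filter fun w => ¬ (u = w ∨ G.Adj u w)).card = s.card :=
      s.card_filter_add_card_filter_not _
    have := hmin u (Finset.mem_filter.1 hu).1
    omega
  calc ({M | IsMaximalIndepSetIn G s M}.ncard : ℝ)
      ≤ ∑ u ∈ N v, ({M | IsMaximalIndepSetIn G (s.filter fun w => ¬ (u = w ∨ G.Adj u w)) M}.ncard
          : ℝ) := by exact_mod_cast ncard_isMaximalIndepSetIn_le_sum hv
    _ ≤ ∑ _u ∈ N v, (3 : ℝ) ^ (((s.card - (N v).card : ℕ) : ℝ) / 3) := by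
        refine Finset.sum_le_sum fun u hu => (ih _ ?_ _ rfl).trans ?_
        · have := hres u hu; omega
        · gcongr
          · norm_num
          · have := hres u hu; omega
    _ ≤ 3 ^ ((s.card : ℝ) / 3) := by
        rw [Finset.sum_const, nsmul_eq_mul]
        have : (N v).card ≤ s.card := Finset.card_filter_le _ _
        exact natCast_mul_three_rpow_le (by omega)

end MoonMoser

section Acyclic

variable {F : CNF2 V} {ρ ρ₁ ρ₂ : V → Option Bool}

def forcedLits (F : CNF2 V) : Set (Lit V) :=
  {w | ∃ l, (l, l) ∈ F ∧ Relation.ReflTransGen (edge F) l w}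

open Classical in
noncomputable def unforcedVars (F : CNF2 V) (s : Finset V) : Finset V :=
  s.filter fun v => ∀ b, (v, b) ∉ forcedLits F

lemma mem_unforcedVars {s : Finset V} {v : V} :
    v ∈ unforcedVars F s ↔ v ∈ s ∧ ∀ b, (v, b) ∉ forcedLits F := by
  simp [unforcedVars]

lemma unforcedVars_subset (s : Finset V) : unforcedVars F s ⊆ s :=
  fun _ hv => (mem_unforcedVars.1 hv).1

lemma litVal_eq_some_true_of_mem_forcedLits (hρ : ∀ c ∈ F, Covers ρ c) {w : Lit V}
    (hw : w ∈ forcedLits F) : litVal ρ w = some true := by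
  obtain ⟨l, hl, hlw⟩ := hw
  have hl' : litVal ρ l = some true := by simpa [Covers] using hρ _ hl
  rcases Relation.reflTransGen_iff_eq_or_transGen.1 hlw with rfl | h
  · exact hl'
  · exact litVal_eq_some_true_of_impliesL hρ h (by simp [hl'])

lemma not_impliesL_of_eq_none (hρ : ∀ c ∈ F, Covers ρ c) {u w : Lit V} (hu : ρ u.1 = none)
    (hw : ρ w.1 = none) : ¬ impliesL F u w := fun h => by
  have := litVal_eq_some_true_of_impliesL hρ h (by simp [litVal, hu])
  simp [litVal, hw] at this

variable [DecidableEq V]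

lemma eq_none_imp_of_filter_eq (ht : TautologyFree F) {s : Finset V} (hv : VarsIn F s)
    (h₁ : primeImplicant2 ρ₁ F) (h₂ : primeImplicant2 ρ₂ F)
    (he : (unforcedVars F s).filter (ρ₁ · = none) = (unforcedVars F s).filter (ρ₂ · = none))
    (v : V) (hv₁ : ρ₁ v = none) : ρ₂ v = none := by
  by_cases hvs : v ∈ s
  · by_cases hvf : ∀ b, (v, b) ∉ forcedLits F
    · have : v ∈ (unforcedVars F s).filter (ρ₁ · = none) :=
        Finset.mem_filter.2 ⟨mem_unforcedVars.2 ⟨hvs, hvf⟩, hv₁⟩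
      rw [he] at this
      exact (Finset.mem_filter.1 this).2
    · obtain ⟨b, hb⟩ := not_forall_not.1 hvf
      have := litVal_eq_some_true_of_mem_forcedLits ((primeImplicant2_iff ht).1 h₁).1 hb
      simp [litVal, hv₁] at this
  · exact eq_none_of_not_mem ht hv h₂ hvs

variable [Finite V]

/-- Acyclicity makes the implication relation well founded, so walking back along critical
clauses from a true literal ends at a unit clause or at a free literal. -/
lemma mem_forcedLits_or_exists_impliesL (ht : TautologyFree F) (hacyc : ∀ u, ¬ impliesL F u u)
    (h : primeImplicant2 ρ F) {t : Lit V} (htrue : litVal ρ t = some true) :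
    t ∈ forcedLits F ∨ ∃ c, litVal ρ c = none ∧ impliesL F c t := by
  have : IsTrans (Lit V) (impliesL F) := ⟨fun _ _ _ => Relation.TransGen.trans⟩
  have : Std.Irrefl (impliesL F) := ⟨hacyc⟩
  induction t using (Finite.wellFounded_of_trans_of_irrefl (impliesL F)).induction with
  | _ t ih =>
  have hcrit := unit_mem_or_exists_edge_of_primeImplicant2 ht h (litVal_eq_some_true_iff.1 htrue)
  simp only [Prod.mk.eta] at hcrit
  rcases hcrit with hu | ⟨w, e, hw⟩
  · exact .inl ⟨t, hu, .refl⟩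
  · cases hwv : litVal ρ w with
    | none => exact .inr ⟨w, hwv, .single e⟩
    | some b =>
      cases b
      · exact absurd hwv hw
      · rcases ih w (.single e) hwv with ⟨l, hl, hlw⟩ | ⟨c, hc, hcw⟩
        · exact .inl ⟨l, hl, hlw.tail e⟩
        · exact .inr ⟨c, hc, hcw.tail e⟩

lemma refines_of_eq_none_imp (ht : TautologyFree F) (hacyc : ∀ u, ¬ impliesL F u u)
    (h₁ : primeImplicant2 ρ₁ F) (h₂ : primeImplicant2 ρ₂ F)
    (hfree : ∀ v, ρ₁ v = none → ρ₂ v = none) : Refines ρ₂ ρ₁ := by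
  have hcov₂ := ((primeImplicant2_iff ht).1 h₂).1
  intro v b hv
  rcases mem_forcedLits_or_exists_impliesL ht hacyc h₁
    (litVal_eq_some_true_iff (l := (v, b)).2 hv) with hf | ⟨c, hc, hcv⟩
  · exact litVal_eq_some_true_iff.1 (litVal_eq_some_true_of_mem_forcedLits hcov₂ hf)
  · have hc₂ : litVal ρ₂ c = none := litVal_eq_none_iff.2 (hfree _ (litVal_eq_none_iff.1 hc))
    exact litVal_eq_some_true_iff.1 (litVal_eq_some_true_of_impliesL hcov₂ hcv (by simp [hc₂]))

lemma isMaximalIndepSetIn_unforcedVars (ht : TautologyFree F) (hacyc : ∀ u, ¬ impliesL F u u)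
    {s : Finset V} (hv : VarsIn F s) (h : primeImplicant2 ρ F) :
    IsMaximalIndepSetIn (SimpleGraph.fromRel (adjVar F)) (unforcedVars F s)
      ((unforcedVars F s).filter (ρ · = none)) := by
  have hcov := ((primeImplicant2_iff ht).1 h).1
  refine ⟨Finset.filter_subset _ _, fun x hx y hy _ hxy => ?_, fun v hv' hvρ => ?_⟩
  · have hx' := (Finset.mem_filter.1 hx).2
    have hy' := (Finset.mem_filter.1 hy).2
    rcases hxy with ⟨-, ⟨-, u, w, rfl, rfl, h | h⟩ | ⟨-, u, w, rfl, rfl, h | h⟩⟩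
    all_goals first
      | exact not_impliesL_of_eq_none hcov hx' hy' h
      | exact not_impliesL_of_eq_none hcov hy' hx' h
  · have hvs := mem_unforcedVars.1 hv'
    obtain ⟨b, hb⟩ := Option.ne_none_iff_exists'.1 fun hn => hvρ (Finset.mem_filter.2 ⟨hv', hn⟩)
    rcases mem_forcedLits_or_exists_impliesL ht hacyc h
      (litVal_eq_some_true_iff (l := (v, b)).2 hb) with hf | ⟨c, hc, hcv⟩
    · exact absurd hf (hvs.2 b)
    · have hcρ : ρ c.1 = none := litVal_eq_none_iff.1 hc
      have hcv' : c.1 ≠ v := fun he => by simp [← he, hcρ] at hb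
      refine ⟨c.1, Finset.mem_filter.2 ⟨mem_unforcedVars.2 ⟨(mem_of_impliesL hv hcv).1, ?_⟩, hcρ⟩,
        hcv', .inl ⟨hcv', c, (v, b), rfl, rfl, .inl hcv⟩⟩
      intro b' hb'
      have := litVal_eq_some_true_iff.1 (litVal_eq_some_true_of_mem_forcedLits hcov hb')
      simp [hcρ] at this

lemma ncard_primeImplicant2_le_of_acyclic (ht : TautologyFree F)
    (hacyc : ∀ u, ¬ impliesL F u u) {s : Finset V} (hv : VarsIn F s) :
    ({ρ | primeImplicant2 ρ F}.ncard : ℝ) ≤ 3 ^ ((s.card : ℝ) / 3) := by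
  have hinj :
      Set.InjOn (fun ρ => (unforcedVars F s).filter (ρ · = none)) {ρ | primeImplicant2 ρ F} :=
    fun ρ₁ h₁ ρ₂ h₂ he => eq_of_refines_of_refines
      (refines_of_eq_none_imp ht hacyc h₂ h₁ (eq_none_imp_of_filter_eq ht hv h₂ h₁ he.symm))
      (refines_of_eq_none_imp ht hacyc h₁ h₂ (eq_none_imp_of_filter_eq ht hv h₁ h₂ he))
  calc ({ρ | primeImplicant2 ρ F}.ncard : ℝ)
      ≤ {M | IsMaximalIndepSetIn (SimpleGraph.fromRel (adjVar F)) (unforcedVars F s) M}.ncard := by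
        exact_mod_cast Set.ncard_le_ncard_of_injOn _
          (fun ρ h => isMaximalIndepSetIn_unforcedVars ht hacyc hv h) hinj
          (finite_setOf_isMaximalIndepSetIn _)
    _ ≤ 3 ^ (((unforcedVars F s).card : ℝ) / 3) := ncard_isMaximalIndepSetIn_le _ _
    _ ≤ 3 ^ ((s.card : ℝ) / 3) := by
        gcongr
        · norm_num
        · exact unforcedVars_subset s

end Acyclic

section StrongComponent

variable {F : CNF2 V} {ρ : V → Option Bool}

def strongComponent (F : CNF2 V) (u : Lit V) : Set (Lit V) :=
  {w | impliesL F u w ∧ impliesL F w u}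

open Classical in
noncomputable def assignLits (L : Set (Lit V)) (b : Bool) : V → Option Bool := fun v =>
  if (v, true) ∈ L then some b else if (v, false) ∈ L then some (!b) else none

lemma assignLits_eq_none_iff {L : Set (Lit V)} {b : Bool} {v : V} :
    assignLits L b v = none ↔ (v, true) ∉ L ∧ (v, false) ∉ L := by
  unfold assignLits
  split_ifs <;> simp_all

lemma assignLits_ne_none {L : Set (Lit V)} {l : Lit V} (hl : l ∈ L) (b : Bool) :
    assignLits L b l.1 ≠ none := by
  obtain ⟨v, c⟩ := l
  cases c <;> simp [assignLits_eq_none_iff, hl]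

lemma refines_assignLits {L : Set (Lit V)} {b : Bool} (h : ∀ l ∈ L, litVal ρ l = some b) :
    Refines ρ (assignLits L b) := by
  intro v c hv
  have h₁ := h (v, true)
  have h₂ := h (v, false)
  unfold assignLits at hv
  split_ifs at hv <;> cases hv <;> cases hρ : ρ v <;> cases b <;> simp_all [litVal]

lemma exists_litVal_eq_of_mem_strongComponent (hρ : ∀ c ∈ F, Covers ρ c) (u : Lit V) :
    ∃ b, ∀ w ∈ strongComponent F u, litVal ρ w = some b := by
  by_cases hu : litVal ρ u = some false
  · refine ⟨false, fun w hw => litVal_negLit_eq_some_true_iff.1 ?_⟩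
    have hneg : litVal ρ (negLit u) = some true := litVal_negLit_eq_some_true_iff.2 hu
    exact litVal_eq_some_true_of_impliesL hρ (impliesL_negLit hw.2) (by simp [hneg])
  · exact ⟨true, fun w hw => litVal_eq_some_true_of_impliesL hρ hw.1 hu⟩

lemma exists_mem_strongComponent_fst_ne (ht : TautologyFree F)
    (hcons : ∀ l, ¬ (impliesL F l (negLit l) ∧ impliesL F (negLit l) l)) {u : Lit V}
    (hu : impliesL F u u) : ∃ w ∈ strongComponent F u, w.1 ≠ u.1 := by
  obtain ⟨w, e, hwu⟩ := Relation.TransGen.head'_iff.1 hu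
  have hne : w ≠ u := fun h => not_edge_self ht u (h ▸ e)
  have hw : w ∈ strongComponent F u := by
    refine ⟨.single e, ?_⟩
    rcases Relation.reflTransGen_iff_eq_or_transGen.1 hwu with h | h
    · exact absurd h.symm hne
    · exact h
  refine ⟨w, hw, fun h => ?_⟩
  obtain rfl := eq_negLit_of_fst_eq h hne
  exact hcons u hw

end StrongComponent

section Counting

lemma ncard_le_add_of_forall_refines [Finite V] {S : Set (V → Option Bool)}
    (σ : Bool → V → Option Bool) (T : Bool → Set (V → Option Bool))
    (hS : ∀ ρ ∈ S, ∃ b, Refines ρ (σ b))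
    (hT : ∀ b, ∀ ρ ∈ S, Refines ρ (σ b) → eraseDom (σ b) ρ ∈ T b) :
    S.ncard ≤ (T true).ncard + (T false).ncard := by
  have hpart : ∀ b, {ρ ∈ S | Refines ρ (σ b)}.ncard ≤ (T b).ncard := fun b =>
    Set.ncard_le_ncard_of_injOn _ (fun ρ hρ => hT b ρ hρ.1 hρ.2)
      (fun _ h₁ _ h₂ he => eq_of_eraseDom_eq h₁.2 h₂.2 he) (Set.toFinite _)
  have hsub : S ⊆ {ρ ∈ S | Refines ρ (σ true)} ∪ {ρ ∈ S | Refines ρ (σ false)} := by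
    intro ρ hρ
    obtain ⟨b, hb⟩ := hS ρ hρ
    cases b
    · exact .inr ⟨hρ, hb⟩
    · exact .inl ⟨hρ, hb⟩
  calc S.ncard ≤ ({ρ ∈ S | Refines ρ (σ true)} ∪ {ρ ∈ S | Refines ρ (σ false)}).ncard :=
        Set.ncard_le_ncard hsub (Set.toFinite _)
    _ ≤ _ := Set.ncard_union_le _ _
    _ ≤ _ := add_le_add (hpart true) (hpart false)

variable [DecidableEq V] [Finite V] {F : CNF2 V} {s : Finset V}

/-- Every implicant is constant on the strong component of `u`, which spans two variables; fixing
that constant embeds each of the two classes of prime implicants into the prime implicants of a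
formula on at least two fewer variables. -/
lemma ncard_primeImplicant2_le_of_impliesL_self (ht : TautologyFree F) (hv : VarsIn F s)
    (hcons : ∀ l, ¬ (impliesL F l (negLit l) ∧ impliesL F (negLit l) l)) {u : Lit V}
    (hu : impliesL F u u)
    (ih : ∀ t : Finset V, t.card < s.card → ∀ F' : CNF2 V, TautologyFree F' → VarsIn F' t →
      ({ρ | primeImplicant2 ρ F'}.ncard : ℝ) ≤ 3 ^ ((t.card : ℝ) / 3)) :
    ({ρ | primeImplicant2 ρ F}.ncard : ℝ) ≤ 3 ^ ((s.card : ℝ) / 3) := by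
  obtain ⟨w, hw, hwu⟩ := exists_mem_strongComponent_fst_ne ht hcons hu
  set X := strongComponent F u
  set t := s.filter (assignLits X true · = none)
  have ht_eq : ∀ b, s.filter (assignLits X b · = none) = t := fun b =>
    Finset.filter_congr fun v _ => by simp only [assignLits_eq_none_iff]
  have hcard : t.card + 2 ≤ s.card := by
    have hus : u.1 ∈ s := (mem_of_impliesL hv hu).1
    have hws : w.1 ∈ (s.erase u.1) := Finset.mem_erase.2 ⟨hwu, (mem_of_impliesL hv hw.1).2⟩
    have hsub : t ⊆ (s.erase u.1).erase w.1 := fun v hvt => by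
      obtain ⟨hvs, hvX⟩ := Finset.mem_filter.1 hvt
      refine Finset.mem_erase.2 ⟨?_, Finset.mem_erase.2 ⟨?_, hvs⟩⟩ <;> rintro rfl
      · exact assignLits_ne_none hw true hvX
      · exact assignLits_ne_none (show u ∈ X from ⟨hu, hu⟩) true hvX
    have := Finset.card_le_card hsub
    have := Finset.card_erase_of_mem hws
    have := Finset.card_erase_of_mem hus
    have := Finset.card_pos.2 ⟨w.1, hws⟩
    omega
  have hres : ∀ b, ({ρ | primeImplicant2 ρ (restrictCNF (assignLits X b) F)}.ncard : ℝ) ≤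
      3 ^ ((t.card : ℝ) / 3) := fun b =>
    ih t (by omega) _ (tautologyFree_restrictCNF ht) (ht_eq b ▸ varsIn_restrictCNF hv)
  calc ({ρ | primeImplicant2 ρ F}.ncard : ℝ)
      ≤ ({ρ | primeImplicant2 ρ (restrictCNF (assignLits X true) F)}.ncard : ℝ) +
        ({ρ | primeImplicant2 ρ (restrictCNF (assignLits X false) F)}.ncard : ℝ) := by
        refine mod_cast ncard_le_add_of_forall_refines (assignLits X)
          (fun b => {ρ | primeImplicant2 ρ (restrictCNF (assignLits X b) F)}) (fun ρ hρ => ?_)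
          (fun b ρ hρ hr => primeImplicant2_restrictCNF ht hρ hr)
        obtain ⟨b, hb⟩ :=
          exists_litVal_eq_of_mem_strongComponent ((primeImplicant2_iff ht).1 hρ).1 u
        exact ⟨b, refines_assignLits hb⟩
    _ ≤ ((2 : ℕ) : ℝ) * 3 ^ ((t.card : ℝ) / 3) := by
        linarith [hres true, hres false]
    _ ≤ 3 ^ ((s.card : ℝ) / 3) := natCast_mul_three_rpow_le hcard

theorem ncard_primeImplicant2_le (s : Finset V) (F : CNF2 V) (ht : TautologyFree F)
    (hv : VarsIn F s) : ({ρ | primeImplicant2 ρ F}.ncard : ℝ) ≤ 3 ^ ((s.card : ℝ) / 3) := by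
  induction hn : s.card using Nat.strong_induction_on generalizing s F with
  | _ n ih =>
  subst hn
  by_cases hcons : ∃ l, impliesL F l (negLit l) ∧ impliesL F (negLit l) l
  · obtain ⟨l, h₁, h₂⟩ := hcons
    have : {ρ | primeImplicant2 ρ F} = ∅ := Set.eq_empty_of_forall_notMem fun ρ hρ =>
      not_forall_covers_of_impliesL_negLit h₁ h₂ ((primeImplicant2_iff ht).1 hρ).1
    rw [this, Set.ncard_empty, Nat.cast_zero]
    positivity
  by_cases hcyc : ∃ u, impliesL F u u
  · obtain ⟨u, hu⟩ := hcyc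
    exact ncard_primeImplicant2_le_of_impliesL_self ht hv (not_exists.1 hcons) hu
      fun t htn F' ht' hv' => ih _ htn t F' ht' hv' rfl
  · exact ncard_primeImplicant2_le_of_acyclic ht (not_exists.1 hcyc) hv

end Counting

theorem prime_implicant_count_2cnf {n : ℕ} (F : CNF2 (Fin n)) :
    ({ρ : Fin n → Option Bool | primeImplicant2 ρ F}.ncard : ℝ)
      ≤ (3 : ℝ) ^ ((n : ℝ) / 3) + (2 : ℝ) ^ ((n : ℝ) / 2) := by
  have h := ncard_primeImplicant2_le Finset.univ (removeTautologies F)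
    (tautologyFree_removeTautologies F) fun _ _ => ⟨Finset.mem_univ _, Finset.mem_univ _⟩
  simp only [primeImplicant2_removeTautologies_iff, Finset.card_univ, Fintype.card_fin] at h
  exact h.trans (le_add_of_nonneg_right (by positivity))
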